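/- arXiv:1505.04522 — 3 statements merged into one kernel-verified Lean document; each statement's English description precedes it below -/
import Mathlib

section
/- Let T be a triangulated category and (U, V) and (V, W) be stable t-structures on T. Then T admits a recollement with middle term T, left term V (via the canonical embedding i_* : V → T), and right term the Verdier quotient T/V, in which the essential image of the left adjoint j_! of the quotient functor is U and the essential image of the right adjoint j_* is W. -/
open CategoryTheory CategoryTheory.Limits CategoryTheory.Pretriangulated

universe v u

variable (T₁ : Type*) [Category T₁]

section RecollementDef

variable (T : Type u) [Category.{v} T] [HasZeroObject T] [Preadditive T] [HasShift T ℤ]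
  [∀ n : ℤ, (shiftFunctor T n).Additive] [Pretriangulated T]
  (T₃ : Type*) [Category T₃]

/-- A recollement of a triangulated category `T` relative to `T₁` and `T₃`: six functors
`i^* ⊣ i_* = i_! ⊣ i^!` and `j_! ⊣ j^! = j^* ⊣ j_*` such that `i_*`, `j_!`, `j_*` are fully
faithful, `i^! j_* = 0` (hence `j^* i_* = 0` and `i^* j_! = 0`), and every object of `T` sits
in the two canonical gluing distinguished triangles. -/
structure Recollement where
  iStar : T₁ ⥤ T
  iUp : T ⥤ T₁
  iShriek : T ⥤ T₁
  jUp : T ⥤ T₃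
  jLow : T₃ ⥤ T
  jStar : T₃ ⥤ T
  adj₁ : iUp ⊣ iStar
  adj₂ : iStar ⊣ iShriek
  adj₃ : jLow ⊣ jUp
  adj₄ : jUp ⊣ jStar
  iStar_full : iStar.Full
  iStar_faithful : iStar.Faithful
  jLow_full : jLow.Full
  jLow_faithful : jLow.Faithful
  jStar_full : jStar.Full
  jStar_faithful : jStar.Faithful
  iShriek_jStar_zero : ∀ X : T₃, IsZero (iShriek.obj (jStar.obj X))
  jUp_iStar_zero : ∀ X : T₁, IsZero (jUp.obj (iStar.obj X))
  iUp_jLow_zero : ∀ X : T₃, IsZero (iUp.obj (jLow.obj X))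
  triangle₁ : ∀ X : T, ∃ h : jStar.obj (jUp.obj X) ⟶ (iStar.obj (iShriek.obj X))⟦(1 : ℤ)⟧,
    Triangle.mk (adj₂.counit.app X) (adj₄.unit.app X) h ∈ distTriang T
  triangle₂ : ∀ X : T, ∃ h : iStar.obj (iUp.obj X) ⟶ (jLow.obj (jUp.obj X))⟦(1 : ℤ)⟧,
    Triangle.mk (adj₃.counit.app X) (adj₁.unit.app X) h ∈ distTriang T

end RecollementDef

section

variable {T : Type u} [Category.{v} T] [HasZeroObject T] [Preadditive T] [HasShift T ℤ]
  [∀ n : ℤ, (shiftFunctor T n).Additive] [Pretriangulated T]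

/-- A pair `(U, V)` of classes of objects of `T` is a stable t-structure if both are closed
under isomorphisms and invariant under the shift, `Hom(U, V) = 0`, and every object sits in a
distinguished triangle `U ⟶ X ⟶ V ⟶ U⟦1⟧` with `U ∈ U`, `V ∈ V`. -/
structure IsStableTStructure (U V : Set T) : Prop where
  U_iso_closed : ∀ ⦃X Y : T⦄, (X ≅ Y) → X ∈ U → Y ∈ U
  V_iso_closed : ∀ ⦃X Y : T⦄, (X ≅ Y) → X ∈ V → Y ∈ V
  U_shift : ∀ X : T, X ∈ U ↔ X⟦(1 : ℤ)⟧ ∈ U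
  V_shift : ∀ X : T, X ∈ V ↔ X⟦(1 : ℤ)⟧ ∈ V
  hom_zero : ∀ X ∈ U, ∀ Y ∈ V, ∀ f : X ⟶ Y, f = 0
  triangle : ∀ X : T, ∃ (U₀ V₀ : T) (_ : U₀ ∈ U) (_ : V₀ ∈ V)
    (u : U₀ ⟶ X) (v : X ⟶ V₀) (w : V₀ ⟶ U₀⟦(1 : ℤ)⟧), Triangle.mk u v w ∈ distTriang T

/-- The morphisms of `T` whose cone belongs to `V`; the Verdier quotient `T/V` is the
localization of `T` at this class. -/
def coneInProp (V : Set T) : MorphismProperty T :=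
  fun X Y f => ∃ (Z : T) (g : Y ⟶ Z) (h : Z ⟶ X⟦(1 : ℤ)⟧),
    Triangle.mk f g h ∈ (distTriang T) ∧ Z ∈ V

set_option linter.unusedSectionVars false
set_option maxHeartbeats 1000000

namespace Miyachi

section MemShift

variable {S : Set T} (hiso : ∀ ⦃X Y : T⦄, (X ≅ Y) → X ∈ S → Y ∈ S)
  (hshift : ∀ X : T, X ∈ S ↔ X⟦(1 : ℤ)⟧ ∈ S)

include hiso hshift in
lemma mem_shift (n : ℤ) {X : T} (hX : X ∈ S) : X⟦n⟧ ∈ S := by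
  induction n using Int.induction_on with
  | zero => exact hiso ((shiftFunctorZero T ℤ).app X).symm hX
  | succ n ih =>
      exact hiso (((shiftFunctorAdd' T (n : ℤ) 1 ((n : ℤ) + 1) rfl).app X).symm)
        ((hshift _).mp ih)
  | pred n ih =>
      refine (hshift (X⟦(-(n : ℤ) - 1)⟧)).mpr (hiso ?_ ih)
      exact (shiftFunctorAdd' T (-(n : ℤ) - 1) 1 (-(n : ℤ)) (by ring)).app X

end MemShift

lemma memU_shift {U V : Set T} (h : IsStableTStructure U V) (n : ℤ) {X : T} (hX : X ∈ U) :
    X⟦n⟧ ∈ U := mem_shift h.U_iso_closed h.U_shift n hX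

lemma memV_shift {U V : Set T} (h : IsStableTStructure U V) (n : ℤ) {X : T} (hX : X ∈ V) :
    X⟦n⟧ ∈ V := mem_shift h.V_iso_closed h.V_shift n hX

section Bij

variable (Tr : Triangle T) (hT : Tr ∈ distTriang T)

include hT in
lemma postcomp₁_bij (X : T) (h3 : ∀ f : X ⟶ Tr.obj₃, f = 0)
    (h3' : ∀ f : X ⟶ Tr.obj₃⟦(-1 : ℤ)⟧, f = 0) :
    Function.Bijective (fun g : X ⟶ Tr.obj₁ => g ≫ Tr.mor₁) := by
  constructor
  · intro g₁ g₂ hg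
    simp only at hg
    obtain ⟨k, hk⟩ := Triangle.coyoneda_exact₂ _ (inv_rot_of_distTriang _ hT) (g₁ - g₂)
      (by show (g₁ - g₂) ≫ Tr.mor₁ = 0; rw [Preadditive.sub_comp, hg, sub_self])
    rw [h3' k] at hk; replace hk := hk.trans zero_comp
    exact sub_eq_zero.mp hk
  · intro f
    obtain ⟨g, hg⟩ := Triangle.coyoneda_exact₂ _ hT f
      (by rw [h3 (f ≫ Tr.mor₂)])
    exact ⟨g, hg.symm⟩

include hT in
lemma postcomp₂_bij (X : T) (h1 : ∀ f : X ⟶ Tr.obj₁, f = 0)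
    (h1' : ∀ f : X ⟶ Tr.obj₁⟦(1 : ℤ)⟧, f = 0) :
    Function.Bijective (fun g : X ⟶ Tr.obj₂ => g ≫ Tr.mor₂) := by
  constructor
  · intro g₁ g₂ hg
    simp only at hg
    obtain ⟨k, hk⟩ := Triangle.coyoneda_exact₂ _ hT (g₁ - g₂)
      (by rw [Preadditive.sub_comp, hg, sub_self])
    rw [h1 k, zero_comp] at hk
    exact sub_eq_zero.mp hk
  · intro f
    obtain ⟨g, hg⟩ := Triangle.coyoneda_exact₃ _ hT f (by rw [h1' (f ≫ Tr.mor₃)])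
    exact ⟨g, hg.symm⟩

include hT in
lemma precomp₂_bij (Z : T) (h1 : ∀ f : Tr.obj₁ ⟶ Z, f = 0)
    (h1' : ∀ f : Tr.obj₁⟦(1 : ℤ)⟧ ⟶ Z, f = 0) :
    Function.Bijective (fun g : Tr.obj₃ ⟶ Z => Tr.mor₂ ≫ g) := by
  constructor
  · intro g₁ g₂ hg
    simp only at hg
    obtain ⟨k, hk⟩ := Triangle.yoneda_exact₃ _ hT (g₁ - g₂)
      (by rw [Preadditive.comp_sub, hg, sub_self])
    rw [h1' k, comp_zero] at hk
    exact sub_eq_zero.mp hk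
  · intro f
    obtain ⟨g, hg⟩ := Triangle.yoneda_exact₂ _ hT f (by rw [h1 (Tr.mor₁ ≫ f)])
    exact ⟨g, hg.symm⟩

include hT in
lemma precomp₁_bij (Z : T) (h3 : ∀ f : Tr.obj₃ ⟶ Z, f = 0)
    (h3' : ∀ f : Tr.obj₃⟦(-1 : ℤ)⟧ ⟶ Z, f = 0) :
    Function.Bijective (fun g : Tr.obj₂ ⟶ Z => Tr.mor₁ ≫ g) := by
  constructor
  · intro g₁ g₂ hg
    simp only at hg
    obtain ⟨k, hk⟩ := Triangle.yoneda_exact₂ _ hT (g₁ - g₂)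
      (by rw [Preadditive.comp_sub, hg, sub_self])
    rw [h3 k, comp_zero] at hk
    exact sub_eq_zero.mp hk
  · intro f
    obtain ⟨g, hg⟩ := Triangle.yoneda_exact₂ _ (inv_rot_of_distTriang _ hT) f
      (by exact h3' _)
    exact ⟨g, hg.symm⟩

end Bij

lemma isIso_of_postcomp_bij {Y Z : T} (g : Y ⟶ Z) (S : Set T) (hY : Y ∈ S) (hZ : Z ∈ S)
    (h : ∀ A ∈ S, Function.Bijective (fun k : A ⟶ Y => k ≫ g)) : IsIso g := by
  obtain ⟨h', hh'⟩ := (h Z hZ).2 (𝟙 Z)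
  simp only at hh'
  refine ⟨h', ?_, hh'⟩
  apply (h Y hY).1
  simp only [Category.assoc, hh', Category.comp_id, Category.id_comp]

lemma isIso_of_precomp_bij {Y Z : T} (g : Y ⟶ Z) (S : Set T) (hY : Y ∈ S) (hZ : Z ∈ S)
    (h : ∀ B ∈ S, Function.Bijective (fun k : Z ⟶ B => g ≫ k)) : IsIso g := by
  obtain ⟨h', hh'⟩ := (h Y hY).2 (𝟙 Y)
  simp only at hh'
  refine ⟨h', hh', ?_⟩
  apply (h Z hZ).1
  simp only [← Category.assoc, hh', Category.comp_id, Category.id_comp]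

/-- Data of a truncation triangle. -/
structure TruncData (U V : Set T) (X : T) where
  A : T
  B : T
  hA : A ∈ U
  hB : B ∈ V
  u : A ⟶ X
  v : X ⟶ B
  w : B ⟶ A⟦(1 : ℤ)⟧
  dist : Triangle.mk u v w ∈ distTriang T

lemma truncData_nonempty {U V : Set T} (h : IsStableTStructure U V) (X : T) :
    Nonempty (TruncData U V X) := by
  obtain ⟨A, B, hA, hB, u, v, w, d⟩ := h.triangle X
  exact ⟨⟨A, B, hA, hB, u, v, w, d⟩⟩

noncomputable def trunc {U V : Set T} (h : IsStableTStructure U V) (X : T) : TruncData U V X :=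
  (truncData_nonempty h X).some


section Constructions

variable {U V W : Set T}

/-! ### `iUp`: left adjoint of the inclusion of `V` -/

noncomputable def iUpEquiv (h₁ : IsStableTStructure U V) (X : T) (Y : ObjectProperty.FullSubcategory (· ∈ V)) :
    ((⟨(trunc h₁ X).B, (trunc h₁ X).hB⟩ : ObjectProperty.FullSubcategory (· ∈ V)) ⟶ Y) ≃
      (X ⟶ (ObjectProperty.ι (· ∈ V)).obj Y) :=
  (ObjectProperty.fullyFaithfulι _).homEquiv.trans (Equiv.ofBijective (fun k => (trunc h₁ X).v ≫ k)
    (precomp₂_bij _ (trunc h₁ X).dist Y.obj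
      (fun f => h₁.hom_zero _ (trunc h₁ X).hA _ Y.property f)
      (fun f => h₁.hom_zero _ (memU_shift h₁ 1 (trunc h₁ X).hA) _ Y.property f)))

lemma iUp_he (h₁ : IsStableTStructure U V) : ∀ (X : T) (Y Y' : ObjectProperty.FullSubcategory (· ∈ V))
    (g : Y ⟶ Y') (h : _ ⟶ Y), (iUpEquiv h₁ X Y') (h ≫ g)
      = (iUpEquiv h₁ X Y) h ≫ (ObjectProperty.ι (· ∈ V)).map g := by
  intro X Y Y' g h
  show (trunc h₁ X).v ≫ (h ≫ g).hom = ((trunc h₁ X).v ≫ h.hom) ≫ g.hom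
  simp

noncomputable def iUpF (h₁ : IsStableTStructure U V) : T ⥤ ObjectProperty.FullSubcategory (· ∈ V) :=
  Adjunction.leftAdjointOfEquiv (iUpEquiv h₁) (iUp_he h₁)

noncomputable def adjA (h₁ : IsStableTStructure U V) :
    iUpF h₁ ⊣ ObjectProperty.ι (· ∈ V) :=
  Adjunction.adjunctionOfEquivLeft (iUpEquiv h₁) (iUp_he h₁)

lemma iUpF_obj (h₁ : IsStableTStructure U V) (X : T) :
    (iUpF h₁).obj X = ⟨(trunc h₁ X).B, (trunc h₁ X).hB⟩ := rfl

lemma adjA_unit_app (h₁ : IsStableTStructure U V) (X : T) :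
    (adjA h₁).unit.app X = (trunc h₁ X).v := by
  rw [adjA, Adjunction.adjunctionOfEquivLeft_unit_app]
  exact Category.comp_id _

/-! ### `iShriek`: right adjoint of the inclusion of `V` -/

noncomputable def iShriekPrim (h₂ : IsStableTStructure V W) (A : ObjectProperty.FullSubcategory (· ∈ V))
    (X : T) : (A.obj ⟶ (trunc h₂ X).A) ≃ ((ObjectProperty.ι (· ∈ V)).obj A ⟶ X) :=
  Equiv.ofBijective (fun k => k ≫ (trunc h₂ X).u)
    (postcomp₁_bij _ (trunc h₂ X).dist A.obj
      (fun f => h₂.hom_zero _ A.property _ (trunc h₂ X).hB f)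
      (fun f => h₂.hom_zero _ A.property _ (memV_shift h₂ (-1) (trunc h₂ X).hB) f))

noncomputable def iShriekEquiv (h₂ : IsStableTStructure V W) (A : ObjectProperty.FullSubcategory (· ∈ V))
    (X : T) : ((ObjectProperty.ι (· ∈ V)).obj A ⟶ X) ≃
      (A ⟶ (⟨(trunc h₂ X).A, (trunc h₂ X).hA⟩ : ObjectProperty.FullSubcategory (· ∈ V))) :=
  (iShriekPrim h₂ A X).symm.trans (Functor.FullyFaithful.homEquiv
    (ObjectProperty.fullyFaithfulι (· ∈ V)) (X := A)
    (Y := ⟨(trunc h₂ X).A, (trunc h₂ X).hA⟩)).symm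

lemma iShriek_cancel (h₂ : IsStableTStructure V W) (A : ObjectProperty.FullSubcategory (· ∈ V)) (X : T)
    {k₁ k₂ : A.obj ⟶ (trunc h₂ X).A}
    (h : k₁ ≫ (trunc h₂ X).u = k₂ ≫ (trunc h₂ X).u) : k₁ = k₂ :=
  (iShriekPrim h₂ A X).injective h

lemma iShriekEquiv_comp (h₂ : IsStableTStructure V W) (A : ObjectProperty.FullSubcategory (· ∈ V)) (X : T)
    (g : (ObjectProperty.ι (· ∈ V)).obj A ⟶ X) :
    @CategoryStruct.comp T _ A.obj (trunc h₂ X).A X (iShriekEquiv h₂ A X g).hom (trunc h₂ X).u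
      = g :=
  Equiv.apply_symm_apply (iShriekPrim h₂ A X) g

lemma iShriek_he (h₂ : IsStableTStructure V W) : ∀ (A' A : ObjectProperty.FullSubcategory (· ∈ V)) (X : T)
    (f : A' ⟶ A) (g : (ObjectProperty.ι (· ∈ V)).obj A ⟶ X),
    iShriekEquiv h₂ A' X ((ObjectProperty.ι (· ∈ V)).map f ≫ g)
      = f ≫ iShriekEquiv h₂ A X g := by
  intro A' A X f g
  ext
  show (iShriekPrim h₂ A' X).symm ((ObjectProperty.ι (· ∈ V)).map f ≫ g)
    = f.hom ≫ (iShriekEquiv h₂ A X g).hom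
  apply (Equiv.symm_apply_eq (iShriekPrim h₂ A' X)).mpr
  conv_lhs => rw [← iShriekEquiv_comp h₂ A X g]
  exact (Category.assoc _ _ _).symm

noncomputable def iShriekF (h₂ : IsStableTStructure V W) : T ⥤ ObjectProperty.FullSubcategory (· ∈ V) :=
  Adjunction.rightAdjointOfEquiv (iShriekEquiv h₂) (iShriek_he h₂)

noncomputable def adjB (h₂ : IsStableTStructure V W) :
    ObjectProperty.ι (· ∈ V) ⊣ iShriekF h₂ :=
  Adjunction.adjunctionOfEquivRight (iShriekEquiv h₂) (iShriek_he h₂)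

lemma iShriekF_obj (h₂ : IsStableTStructure V W) (X : T) :
    (iShriekF h₂).obj X = ⟨(trunc h₂ X).A, (trunc h₂ X).hA⟩ := rfl

lemma adjB_counit_app (h₂ : IsStableTStructure V W) (X : T) :
    (adjB h₂).counit.app X = (trunc h₂ X).u := by
  rw [adjB, Adjunction.adjunctionOfEquivRight_counit_app]
  exact Category.id_comp _

/-! ### `b`: reflection of `T` onto `W` -/

noncomputable def bEquiv (h₂ : IsStableTStructure V W) (X : T) (B : ObjectProperty.FullSubcategory (· ∈ W)) :
    ((⟨(trunc h₂ X).B, (trunc h₂ X).hB⟩ : ObjectProperty.FullSubcategory (· ∈ W)) ⟶ B) ≃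
      (X ⟶ (ObjectProperty.ι (· ∈ W)).obj B) :=
  (ObjectProperty.fullyFaithfulι _).homEquiv.trans (Equiv.ofBijective (fun k => (trunc h₂ X).v ≫ k)
    (precomp₂_bij _ (trunc h₂ X).dist B.obj
      (fun f => h₂.hom_zero _ (trunc h₂ X).hA _ B.property f)
      (fun f => h₂.hom_zero _ (memU_shift h₂ 1 (trunc h₂ X).hA) _ B.property f)))

lemma b_he (h₂ : IsStableTStructure V W) : ∀ (X : T) (B B' : ObjectProperty.FullSubcategory (· ∈ W))
    (g : B ⟶ B') (h : _ ⟶ B), (bEquiv h₂ X B') (h ≫ g)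
      = (bEquiv h₂ X B) h ≫ (ObjectProperty.ι (· ∈ W)).map g := by
  intro X B B' g h
  show (trunc h₂ X).v ≫ (h ≫ g).hom = ((trunc h₂ X).v ≫ h.hom) ≫ g.hom
  simp

noncomputable def bF (h₂ : IsStableTStructure V W) : T ⥤ ObjectProperty.FullSubcategory (· ∈ W) :=
  Adjunction.leftAdjointOfEquiv (bEquiv h₂) (b_he h₂)

noncomputable def adjC (h₂ : IsStableTStructure V W) :
    bF h₂ ⊣ ObjectProperty.ι (· ∈ W) :=
  Adjunction.adjunctionOfEquivLeft (bEquiv h₂) (b_he h₂)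

lemma bF_obj (h₂ : IsStableTStructure V W) (X : T) :
    (bF h₂).obj X = ⟨(trunc h₂ X).B, (trunc h₂ X).hB⟩ := rfl

lemma adjC_unit_app (h₂ : IsStableTStructure V W) (X : T) :
    (adjC h₂).unit.app X = (trunc h₂ X).v := by
  rw [adjC, Adjunction.adjunctionOfEquivLeft_unit_app]
  exact Category.comp_id _

lemma bF_map_spec (h₂ : IsStableTStructure V W) {X Y : T} (g : X ⟶ Y) :
    (trunc h₂ X).v ≫ ((ObjectProperty.ι (· ∈ W)).map ((bF h₂).map g))
      = g ≫ (trunc h₂ Y).v := by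
  have h := (adjC h₂).unit.naturality g
  rw [adjC_unit_app, adjC_unit_app] at h
  exact h.symm

noncomputable def bMapT (h₂ : IsStableTStructure V W) {X Y : T} (f : X ⟶ Y) :
    (trunc h₂ X).B ⟶ (trunc h₂ Y).B := ((bF h₂).map f).hom

lemma bMapT_spec (h₂ : IsStableTStructure V W) {X Y : T} (g : X ⟶ Y) :
    (trunc h₂ X).v ≫ bMapT h₂ g = g ≫ (trunc h₂ Y).v := bF_map_spec h₂ g

end Constructions

section CFunctor

variable {U V W : Set T}

/-! ### `c`: the left adjoint of `b` -/

noncomputable def cEqA (h₁ : IsStableTStructure U V) (h₂ : IsStableTStructure V W)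
    (B : ObjectProperty.FullSubcategory (· ∈ W)) (Y : T) :
    ((trunc h₁ B.obj).A ⟶ Y) ≃ ((trunc h₁ B.obj).A ⟶ (trunc h₂ Y).B) :=
  Equiv.ofBijective (fun k => k ≫ (trunc h₂ Y).v)
    (postcomp₂_bij _ (trunc h₂ Y).dist _
      (fun f => h₁.hom_zero _ (trunc h₁ B.obj).hA _ (trunc h₂ Y).hA f)
      (fun f => h₁.hom_zero _ (trunc h₁ B.obj).hA _ (memV_shift h₁ 1 (trunc h₂ Y).hA) f))

noncomputable def cEqB (h₁ : IsStableTStructure U V) (h₂ : IsStableTStructure V W)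
    (B : ObjectProperty.FullSubcategory (· ∈ W)) (Y : T) :
    ((trunc h₁ B.obj).A ⟶ (trunc h₂ Y).B) ≃ (B.obj ⟶ (trunc h₂ Y).B) :=
  (Equiv.ofBijective (fun k => (trunc h₁ B.obj).u ≫ k)
    (precomp₁_bij _ (trunc h₁ B.obj).dist _
      (fun f => h₂.hom_zero _ (trunc h₁ B.obj).hB _ (trunc h₂ Y).hB f)
      (fun f => h₂.hom_zero _ (memV_shift h₁ (-1) (trunc h₁ B.obj).hB) _
        (trunc h₂ Y).hB f))).symm

noncomputable def cEquiv (h₁ : IsStableTStructure U V) (h₂ : IsStableTStructure V W)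
    (B : ObjectProperty.FullSubcategory (· ∈ W)) (Y : T) :
    ((trunc h₁ B.obj).A ⟶ Y) ≃ (B ⟶ (bF h₂).obj Y) :=
  ((cEqA h₁ h₂ B Y).trans (cEqB h₁ h₂ B Y)).trans (Functor.FullyFaithful.homEquiv
    (ObjectProperty.fullyFaithfulι (· ∈ W)) (X := B) (Y := (bF h₂).obj Y)).symm

lemma cEquiv_comp (h₁ : IsStableTStructure U V) (h₂ : IsStableTStructure V W)
    (B : ObjectProperty.FullSubcategory (· ∈ W)) (Y : T) (h : (trunc h₁ B.obj).A ⟶ Y) :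
    @CategoryStruct.comp T _ (trunc h₁ B.obj).A B.obj (trunc h₂ Y).B
      (trunc h₁ B.obj).u (cEquiv h₁ h₂ B Y h).hom = h ≫ (trunc h₂ Y).v :=
  Equiv.symm_apply_apply (cEqB h₁ h₂ B Y) ((cEqA h₁ h₂ B Y) h)

lemma c_cancel (h₁ : IsStableTStructure U V) (h₂ : IsStableTStructure V W)
    (B : ObjectProperty.FullSubcategory (· ∈ W)) (Y : T) {k₁ k₂ : B.obj ⟶ (trunc h₂ Y).B}
    (h : (trunc h₁ B.obj).u ≫ k₁ = (trunc h₁ B.obj).u ≫ k₂) : k₁ = k₂ :=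
  ((cEqB h₁ h₂ B Y).symm).injective h

lemma c_he (h₁ : IsStableTStructure U V) (h₂ : IsStableTStructure V W) :
    ∀ (B : ObjectProperty.FullSubcategory (· ∈ W)) (Y Y' : T) (g : Y ⟶ Y') (h : (trunc h₁ B.obj).A ⟶ Y),
      cEquiv h₁ h₂ B Y' (h ≫ g) = cEquiv h₁ h₂ B Y h ≫ (bF h₂).map g := by
  intro B Y Y' g h
  ext
  apply c_cancel h₁ h₂ B Y'
  rw [cEquiv_comp]
  exact (Category.assoc _ _ _).trans ((congrArg (h ≫ ·) (bF_map_spec h₂ g).symm).trans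
    (((Category.assoc _ _ _).symm.trans
      (congrArg (· ≫ _) (cEquiv_comp h₁ h₂ B Y h).symm)).trans (Category.assoc _ _ _)))

noncomputable def cF (h₁ : IsStableTStructure U V) (h₂ : IsStableTStructure V W) :
    ObjectProperty.FullSubcategory (· ∈ W) ⥤ T :=
  Adjunction.leftAdjointOfEquiv (cEquiv h₁ h₂) (c_he h₁ h₂)

noncomputable def adjD (h₁ : IsStableTStructure U V) (h₂ : IsStableTStructure V W) :
    cF h₁ h₂ ⊣ bF h₂ :=
  Adjunction.adjunctionOfEquivLeft (cEquiv h₁ h₂) (c_he h₁ h₂)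

lemma cF_obj (h₁ : IsStableTStructure U V) (h₂ : IsStableTStructure V W)
    (B : ObjectProperty.FullSubcategory (· ∈ W)) : (cF h₁ h₂).obj B = (trunc h₁ B.obj).A := rfl

lemma adjD_counit_spec (h₁ : IsStableTStructure U V) (h₂ : IsStableTStructure V W) (Y : T) :
    (adjD h₁ h₂).counit.app Y ≫ (trunc h₂ Y).v = (trunc h₁ ((trunc h₂ Y).B)).u := by
  have e1 : cEquiv h₁ h₂ ((bF h₂).obj Y) Y ((adjD h₁ h₂).counit.app Y)
      = 𝟙 ((bF h₂).obj Y) := by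
    show cEquiv h₁ h₂ ((bF h₂).obj Y) Y
        ((Adjunction.adjunctionOfEquivLeft (cEquiv h₁ h₂) (c_he h₁ h₂)).counit.app Y) = _
    rw [Adjunction.adjunctionOfEquivLeft_counit_app]
    exact Equiv.apply_symm_apply _ _
  have h := cEquiv_comp h₁ h₂ ((bF h₂).obj Y) Y ((adjD h₁ h₂).counit.app Y)
  rw [e1] at h
  exact h.symm.trans (Category.comp_id ((trunc h₁ ((trunc h₂ Y).B)).u))

lemma adjD_unit_spec (h₁ : IsStableTStructure U V) (h₂ : IsStableTStructure V W)
    (B : ObjectProperty.FullSubcategory (· ∈ W)) :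
    @CategoryStruct.comp T _ (trunc h₁ B.obj).A B.obj (trunc h₂ ((trunc h₁ B.obj).A)).B
      (trunc h₁ B.obj).u ((adjD h₁ h₂).unit.app B).hom
      = (trunc h₂ ((trunc h₁ B.obj).A)).v := by
  have e1 : (adjD h₁ h₂).unit.app B
      = cEquiv h₁ h₂ B ((cF h₁ h₂).obj B) (𝟙 ((cF h₁ h₂).obj B)) := by
    show (Adjunction.adjunctionOfEquivLeft (cEquiv h₁ h₂) (c_he h₁ h₂)).unit.app B = _
    rw [Adjunction.adjunctionOfEquivLeft_unit_app]
    rfl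
  rw [e1]
  exact (cEquiv_comp h₁ h₂ B _ _).trans (Category.id_comp _)

end CFunctor

section GeneralAdjunction

variable {C : Type*} {D : Type*} [Category C] [Category D]

lemma counit_postcomp_bij {F : C ⥤ D} {G : D ⥤ C} (adj : F ⊣ G) (hF : F.FullyFaithful)
    (X : D) (M : C) :
    Function.Bijective (fun k : F.obj M ⟶ F.obj (G.obj X) => k ≫ adj.counit.app X) := by
  have he : (fun k : F.obj M ⟶ F.obj (G.obj X) => k ≫ adj.counit.app X)
      = fun k => (adj.homEquiv M X).symm (hF.homEquiv.symm k) := by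
    funext k
    rw [Adjunction.homEquiv_counit]
    congr 1
    exact (hF.homEquiv.apply_symm_apply k).symm
  rw [he]
  exact ((adj.homEquiv M X).symm.bijective).comp (hF.homEquiv.symm.bijective)

lemma unit_precomp_bij {F : C ⥤ D} {G : D ⥤ C} (adj : F ⊣ G) (hG : G.FullyFaithful)
    (X : C) (N : D) :
    Function.Bijective (fun k : G.obj (F.obj X) ⟶ G.obj N => adj.unit.app X ≫ k) := by
  have he : (fun k : G.obj (F.obj X) ⟶ G.obj N => adj.unit.app X ≫ k)
      = fun k => (adj.homEquiv X N) (hG.homEquiv.symm k) := by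
    funext k
    rw [Adjunction.homEquiv_unit]
    congr 1
    exact (hG.homEquiv.apply_symm_apply k).symm
  rw [he]
  exact ((adj.homEquiv X N).bijective).comp (hG.homEquiv.symm.bijective)

lemma isZero_of_functor_isZero (E : C ≌ D) (X : C) (h : IsZero (E.functor.obj X)) :
    IsZero X := by
  have hFF : E.functor.FullyFaithful := E.fullyFaithfulFunctor
  constructor
  · intro Y
    obtain ⟨u⟩ := h.unique_to (E.functor.obj Y)
    exact ⟨@Equiv.unique _ _ u hFF.homEquiv⟩
  · intro Y
    obtain ⟨u⟩ := h.unique_from (E.functor.obj Y)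
    exact ⟨@Equiv.unique _ _ u hFF.homEquiv⟩

end GeneralAdjunction

lemma isZero_fullSub {P : T → Prop} (B : ObjectProperty.FullSubcategory P) (h : IsZero B.obj) : IsZero B := by
  constructor
  · intro Y
    obtain ⟨u⟩ := h.unique_to Y.obj
    exact ⟨@Equiv.unique _ _ u (ObjectProperty.fullyFaithfulι _).homEquiv⟩
  · intro Y
    obtain ⟨u⟩ := h.unique_from Y.obj
    exact ⟨@Equiv.unique _ _ u (ObjectProperty.fullyFaithfulι _).homEquiv⟩

section Localization

variable {U V W : Set T}

lemma precompF_bij_of_cone (h₂ : IsStableTStructure V W) {X Y Z : T} {f : X ⟶ Y} {g : Y ⟶ Z}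
    {h' : Z ⟶ X⟦(1 : ℤ)⟧} (hdist : Triangle.mk f g h' ∈ distTriang T) (hZ : Z ∈ V)
    {B : T} (hB : B ∈ W) : Function.Bijective (fun k : Y ⟶ B => f ≫ k) :=
  precomp₁_bij _ hdist B (fun k => h₂.hom_zero _ hZ _ hB k)
    (fun k => h₂.hom_zero _ (memU_shift h₂ (-1) hZ) _ hB k)

lemma precompV_bij (h₂ : IsStableTStructure V W) (X : T) {B : T} (hB : B ∈ W) :
    Function.Bijective (fun k : (trunc h₂ X).B ⟶ B => (trunc h₂ X).v ≫ k) :=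
  precomp₂_bij _ (trunc h₂ X).dist B (fun k => h₂.hom_zero _ (trunc h₂ X).hA _ hB k)
    (fun k => h₂.hom_zero _ (memU_shift h₂ 1 (trunc h₂ X).hA) _ hB k)

lemma coneInProp_eq (h₁ : IsStableTStructure U V) (h₂ : IsStableTStructure V W) :
    coneInProp V =
      (MorphismProperty.isomorphisms (ObjectProperty.FullSubcategory (· ∈ W))).inverseImage (bF h₂) := by
  apply MorphismProperty.ext
  intro X Y f
  constructor
  · rintro ⟨Z, g, h', hdist, hZ⟩
    show IsIso ((bF h₂).map f)
    have hm : IsIso (bMapT h₂ f) := by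
      apply isIso_of_precomp_bij _ W (trunc h₂ X).hB (trunc h₂ Y).hB
      intro B' hB'
      have comm : (fun k : (trunc h₂ X).B ⟶ B' => (trunc h₂ X).v ≫ k) ∘
          (fun k : (trunc h₂ Y).B ⟶ B' => bMapT h₂ f ≫ k)
          = (fun k : Y ⟶ B' => f ≫ k) ∘ (fun k => (trunc h₂ Y).v ≫ k) := by
        funext k
        show (trunc h₂ X).v ≫ bMapT h₂ f ≫ k = f ≫ (trunc h₂ Y).v ≫ k
        rw [← Category.assoc, bMapT_spec, Category.assoc]
      exact (Function.Bijective.of_comp_iff' (precompV_bij h₂ X hB') _).mp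
        (by rw [comm]
            exact (precompF_bij_of_cone h₂ hdist hZ hB').comp (precompV_bij h₂ Y hB'))
    have hm' : IsIso ((ObjectProperty.ι (· ∈ W)).map ((bF h₂).map f)) := hm
    exact isIso_of_reflects_iso _ (ObjectProperty.ι (· ∈ W))
  · intro hf
    replace hf : IsIso ((bF h₂).map f) := hf
    obtain ⟨Z, g, h', hdist⟩ := Pretriangulated.distinguished_cocone_triangle f
    have hm : IsIso (bMapT h₂ f) := by
      have : IsIso ((ObjectProperty.ι (· ∈ W)).map ((bF h₂).map f)) := inferInstance
      exact this
    -- precomposition with `f` is bijective into objects of `W`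
    have precompF : ∀ (B' : T), B' ∈ W → Function.Bijective (fun k : Y ⟶ B' => f ≫ k) := by
      intro B' hB'
      have comm : (fun k : (trunc h₂ X).B ⟶ B' => (trunc h₂ X).v ≫ k) ∘
          (fun k : (trunc h₂ Y).B ⟶ B' => bMapT h₂ f ≫ k)
          = (fun k : Y ⟶ B' => f ≫ k) ∘ (fun k => (trunc h₂ Y).v ≫ k) := by
        funext k
        show (trunc h₂ X).v ≫ bMapT h₂ f ≫ k = f ≫ (trunc h₂ Y).v ≫ k
        rw [← Category.assoc, bMapT_spec, Category.assoc]
      have bijm : Function.Bijective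
          (fun k : (trunc h₂ Y).B ⟶ B' => bMapT h₂ f ≫ k) := by
        constructor
        · intro a b hab
          simpa using congrArg (fun t => inv (bMapT h₂ f) ≫ t) hab
        · intro t
          exact ⟨inv (bMapT h₂ f) ≫ t, by simp⟩
      have : Function.Bijective ((fun k : Y ⟶ B' => f ≫ k) ∘
          (fun k => (trunc h₂ Y).v ≫ k)) := by
        rw [← comm]
        exact (precompV_bij h₂ X hB').comp bijm
      exact (Function.Bijective.of_comp_iff _ (precompV_bij h₂ Y hB')).mp this
    -- every map from `Z` to an object of `W` vanishes
    have hZW : ∀ (B' : T), B' ∈ W → ∀ k : Z ⟶ B', k = 0 := by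
      intro B' hB' k
      have z12 : f ≫ g = 0 := comp_distTriang_mor_zero₁₂ _ hdist
      have hgk : g ≫ k = 0 := by
        apply (precompF B' hB').1
        show f ≫ g ≫ k = f ≫ 0
        rw [← Category.assoc, z12, Limits.zero_comp, Limits.comp_zero]
      obtain ⟨t, ht₀⟩ := Triangle.yoneda_exact₃ _ hdist k hgk
      have ht : k = h' ≫ t := ht₀
      -- factor t through f⟦1⟧
      have bijshift : Function.Bijective
          (fun s : Y⟦(1 : ℤ)⟧ ⟶ B' => (shiftFunctor T (1 : ℤ)).map f ≫ s) := by
        have adj := (shiftEquiv T (1 : ℤ)).toAdjunction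
        have hnat : ∀ s : Y⟦(1 : ℤ)⟧ ⟶ B',
            (adj.homEquiv X B') ((shiftFunctor T (1 : ℤ)).map f ≫ s)
              = f ≫ (adj.homEquiv Y B') s := fun s =>
          Adjunction.homEquiv_naturality_left adj f s
        have : (fun s : Y⟦(1 : ℤ)⟧ ⟶ B' => (shiftFunctor T (1 : ℤ)).map f ≫ s)
            = (adj.homEquiv X B').symm ∘ (fun k' => f ≫ k') ∘ (adj.homEquiv Y B') := by
          funext s
          exact ((adj.homEquiv X B').symm_apply_apply _).symm.trans
            (congrArg (adj.homEquiv X B').symm (hnat s))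
        rw [this]
        exact ((adj.homEquiv X B').symm.bijective).comp
          ((precompF _ (memV_shift h₂ (-1) hB')).comp ((adj.homEquiv Y B').bijective))
      obtain ⟨s, hs⟩ := bijshift.2 t
      simp only at hs
      have z31 : h' ≫ (shiftFunctor T (1 : ℤ)).map f = 0 :=
        comp_distTriang_mor_zero₃₁ _ hdist
      rw [ht, ← hs, ← Category.assoc, z31, Limits.zero_comp]
    -- conclude `Z ∈ V`
    have hv0 : (trunc h₂ Z).v = 0 := hZW _ (trunc h₂ Z).hB _
    have hid : 𝟙 ((trunc h₂ Z).B) = 0 := by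
      obtain ⟨g', hg'⟩ := Triangle.yoneda_exact₃ _ (trunc h₂ Z).dist (𝟙 _)
        (by rw [Category.comp_id]; exact hv0)
      show 𝟙 ((Triangle.mk (trunc h₂ Z).u (trunc h₂ Z).v (trunc h₂ Z).w).obj₃) = 0
      rw [hg', h₂.hom_zero _ (memU_shift h₂ 1 (trunc h₂ Z).hA) _ (trunc h₂ Z).hB g']
      exact Limits.comp_zero
    have hzero : IsZero ((trunc h₂ Z).B) := (IsZero.iff_id_eq_zero _).mpr hid
    have : IsIso ((trunc h₂ Z).u) :=
      (Triangle.isZero₃_iff_isIso₁ _ (trunc h₂ Z).dist).mp hzero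
    exact ⟨Z, g, h', hdist, h₂.U_iso_closed (asIso ((trunc h₂ Z).u)) (trunc h₂ Z).hA⟩

lemma bF_isLocalization (h₁ : IsStableTStructure U V) (h₂ : IsStableTStructure V W) :
    (bF h₂).IsLocalization (coneInProp V) := by
  rw [coneInProp_eq h₁ h₂]
  exact (adjC h₂).isLocalization

end Localization

section Glue

variable {U V W : Set T}

noncomputable def Eqv (h₁ : IsStableTStructure U V) (h₂ : IsStableTStructure V W) :
    (coneInProp V).Localization ≌ ObjectProperty.FullSubcategory (· ∈ W) :=
  letI := bF_isLocalization h₁ h₂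
  Localization.uniq (coneInProp V).Q (bF h₂) (coneInProp V)

noncomputable def bEqvIso (h₁ : IsStableTStructure U V) (h₂ : IsStableTStructure V W) :
    bF h₂ ⋙ (Eqv h₁ h₂).inverse ≅ (coneInProp V).Q :=
  letI := bF_isLocalization h₁ h₂
  Localization.compUniqInverse (coneInProp V).Q (bF h₂) (coneInProp V)

noncomputable def QEqvIso (h₁ : IsStableTStructure U V) (h₂ : IsStableTStructure V W) :
    (coneInProp V).Q ⋙ (Eqv h₁ h₂).functor ≅ bF h₂ :=
  letI := bF_isLocalization h₁ h₂
  Localization.compUniqFunctor (coneInProp V).Q (bF h₂) (coneInProp V)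

noncomputable def jStarF (h₁ : IsStableTStructure U V) (h₂ : IsStableTStructure V W) :
    (coneInProp V).Localization ⥤ T :=
  (Eqv h₁ h₂).functor ⋙ ObjectProperty.ι (· ∈ W)

noncomputable def jLowF (h₁ : IsStableTStructure U V) (h₂ : IsStableTStructure V W) :
    (coneInProp V).Localization ⥤ T :=
  (Eqv h₁ h₂).functor ⋙ cF h₁ h₂

noncomputable def adj4 (h₁ : IsStableTStructure U V) (h₂ : IsStableTStructure V W) :
    (coneInProp V).Q ⊣ jStarF h₁ h₂ :=
  Adjunction.ofNatIsoLeft ((adjC h₂).comp (Eqv h₁ h₂).symm.toAdjunction) (bEqvIso h₁ h₂)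

noncomputable def adj3 (h₁ : IsStableTStructure U V) (h₂ : IsStableTStructure V W) :
    jLowF h₁ h₂ ⊣ (coneInProp V).Q :=
  Adjunction.ofNatIsoRight ((Eqv h₁ h₂).toAdjunction.comp (adjD h₁ h₂)) (bEqvIso h₁ h₂)

noncomputable def etaT (h₁ : IsStableTStructure U V) (h₂ : IsStableTStructure V W)
    (B : ObjectProperty.FullSubcategory (· ∈ W)) :
    B.obj ⟶ (trunc h₂ ((trunc h₁ B.obj).A)).B :=
  ((adjD h₁ h₂).unit.app B).hom

lemma etaT_spec (h₁ : IsStableTStructure U V) (h₂ : IsStableTStructure V W)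
    (B : ObjectProperty.FullSubcategory (· ∈ W)) :
    (trunc h₁ B.obj).u ≫ etaT h₁ h₂ B = (trunc h₂ ((trunc h₁ B.obj).A)).v :=
  adjD_unit_spec h₁ h₂ B

lemma adjD_unit_app_isIso (h₁ : IsStableTStructure U V) (h₂ : IsStableTStructure V W)
    (B : ObjectProperty.FullSubcategory (· ∈ W)) : IsIso ((adjD h₁ h₂).unit.app B) := by
  have hi : IsIso (etaT h₁ h₂ B) := by
    apply isIso_of_precomp_bij _ W B.property (trunc h₂ ((trunc h₁ B.obj).A)).hB
    intro B' hB'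
    have bijU : Function.Bijective (fun k : B.obj ⟶ B' => (trunc h₁ B.obj).u ≫ k) :=
      precomp₁_bij _ (trunc h₁ B.obj).dist B'
        (fun k => h₂.hom_zero _ (trunc h₁ B.obj).hB _ hB' k)
        (fun k => h₂.hom_zero _ (memV_shift h₁ (-1) (trunc h₁ B.obj).hB) _ hB' k)
    have comm : (fun k : B.obj ⟶ B' => (trunc h₁ B.obj).u ≫ k) ∘
        (fun k : (trunc h₂ ((trunc h₁ B.obj).A)).B ⟶ B' => etaT h₁ h₂ B ≫ k)
        = fun k => (trunc h₂ ((trunc h₁ B.obj).A)).v ≫ k := by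
      funext k
      show (trunc h₁ B.obj).u ≫ etaT h₁ h₂ B ≫ k = _
      rw [← Category.assoc, etaT_spec]
    exact (Function.Bijective.of_comp_iff' bijU _).mp
      (by rw [comm]; exact precompV_bij h₂ ((trunc h₁ B.obj).A) hB')
  have hi' : IsIso ((ObjectProperty.ι (· ∈ W)).map ((adjD h₁ h₂).unit.app B)) := hi
  exact isIso_of_reflects_iso _ (ObjectProperty.ι (· ∈ W))

noncomputable def cFF (h₁ : IsStableTStructure U V) (h₂ : IsStableTStructure V W) :
    (cF h₁ h₂).FullyFaithful := by
  haveI : ∀ B, IsIso ((adjD h₁ h₂).unit.app B) := adjD_unit_app_isIso h₁ h₂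
  haveI : IsIso (adjD h₁ h₂).unit := NatIso.isIso_of_isIso_app _
  exact (adjD h₁ h₂).fullyFaithfulLOfIsIsoUnit

lemma cF_full (h₁ : IsStableTStructure U V) (h₂ : IsStableTStructure V W) :
    (cF h₁ h₂).Full := (cFF h₁ h₂).full

lemma cF_faithful (h₁ : IsStableTStructure U V) (h₂ : IsStableTStructure V W) :
    (cF h₁ h₂).Faithful := (cFF h₁ h₂).faithful

lemma jLowF_full (h₁ : IsStableTStructure U V) (h₂ : IsStableTStructure V W) :
    (jLowF h₁ h₂).Full := by
  haveI := cF_full h₁ h₂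
  show ((Eqv h₁ h₂).functor ⋙ cF h₁ h₂).Full
  infer_instance

lemma jLowF_faithful (h₁ : IsStableTStructure U V) (h₂ : IsStableTStructure V W) :
    (jLowF h₁ h₂).Faithful := by
  haveI := cF_faithful h₁ h₂
  show ((Eqv h₁ h₂).functor ⋙ cF h₁ h₂).Faithful
  infer_instance

lemma jStarF_full (h₁ : IsStableTStructure U V) (h₂ : IsStableTStructure V W) :
    (jStarF h₁ h₂).Full := by
  show ((Eqv h₁ h₂).functor ⋙ ObjectProperty.ι (· ∈ W)).Full
  infer_instance

lemma jStarF_faithful (h₁ : IsStableTStructure U V) (h₂ : IsStableTStructure V W) :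
    (jStarF h₁ h₂).Faithful := by
  show ((Eqv h₁ h₂).functor ⋙ ObjectProperty.ι (· ∈ W)).Faithful
  infer_instance

end Glue

section Images

variable {U V W : Set T}

lemma iso_precomp_bij {C : Type*} [Category C] {X Y : C} (e : X ≅ Y) (Z : C) :
    Function.Bijective (fun k : Y ⟶ Z => e.hom ≫ k) := by
  constructor
  · intro a b hab
    simpa using congrArg (fun t => e.inv ≫ t) hab
  · intro t
    exact ⟨e.inv ≫ t, by simp⟩

lemma iso_postcomp_bij {C : Type*} [Category C] {X Y : C} (e : X ≅ Y) (Z : C) :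
    Function.Bijective (fun k : Z ⟶ X => k ≫ e.hom) := by
  constructor
  · intro a b hab
    simpa using congrArg (fun t => t ≫ e.inv) hab
  · intro t
    exact ⟨t ≫ e.inv, by simp⟩

lemma jLowF_obj_mem (h₁ : IsStableTStructure U V) (h₂ : IsStableTStructure V W)
    (M : (coneInProp V).Localization) : (jLowF h₁ h₂).obj M ∈ U :=
  (trunc h₁ ((Eqv h₁ h₂).functor.obj M).obj).hA

lemma jStarF_obj_mem (h₁ : IsStableTStructure U V) (h₂ : IsStableTStructure V W)
    (M : (coneInProp V).Localization) : (jStarF h₁ h₂).obj M ∈ W :=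
  ((Eqv h₁ h₂).functor.obj M).property

lemma adjD_counit_app_isIso (h₁ : IsStableTStructure U V) (h₂ : IsStableTStructure V W)
    {A : T} (hA : A ∈ U) : IsIso ((adjD h₁ h₂).counit.app A) := by
  have spec := adjD_counit_spec h₁ h₂ A
  apply isIso_of_postcomp_bij _ U (trunc h₁ ((trunc h₂ A).B)).hA hA
  intro A' hA'
  have bijV : Function.Bijective (fun k : A' ⟶ A => k ≫ (trunc h₂ A).v) :=
    postcomp₂_bij _ (trunc h₂ A).dist A'
      (fun f => h₁.hom_zero _ hA' _ (trunc h₂ A).hA f)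
      (fun f => h₁.hom_zero _ hA' _ (memV_shift h₁ 1 (trunc h₂ A).hA) f)
  have bijU : Function.Bijective
      (fun k : A' ⟶ (trunc h₁ ((trunc h₂ A).B)).A => k ≫ (trunc h₁ ((trunc h₂ A).B)).u) :=
    postcomp₁_bij _ (trunc h₁ ((trunc h₂ A).B)).dist A'
      (fun f => h₁.hom_zero _ hA' _ (trunc h₁ ((trunc h₂ A).B)).hB f)
      (fun f => h₁.hom_zero _ hA' _ (memV_shift h₁ (-1) (trunc h₁ ((trunc h₂ A).B)).hB) f)
  have comm : (fun k : A' ⟶ A => k ≫ (trunc h₂ A).v) ∘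
      (fun k : A' ⟶ (trunc h₁ ((trunc h₂ A).B)).A => k ≫ (adjD h₁ h₂).counit.app A)
      = fun k => k ≫ (trunc h₁ ((trunc h₂ A).B)).u := by
    funext k
    show (k ≫ (adjD h₁ h₂).counit.app A) ≫ (trunc h₂ A).v = _
    exact (Category.assoc _ _ _).trans (congrArg (k ≫ ·) spec)
  exact (Function.Bijective.of_comp_iff' bijV _).mp (by rw [comm]; exact bijU)

lemma exists_jLowF_iso (h₁ : IsStableTStructure U V) (h₂ : IsStableTStructure V W)
    {A : T} (hA : A ∈ U) :
    Nonempty ((jLowF h₁ h₂).obj ((Eqv h₁ h₂).inverse.obj ((bF h₂).obj A)) ≅ A) := by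
  haveI := adjD_counit_app_isIso h₁ h₂ hA
  exact ⟨(cF h₁ h₂).mapIso ((Eqv h₁ h₂).counitIso.app ((bF h₂).obj A)) ≪≫
    asIso ((adjD h₁ h₂).counit.app A)⟩

lemma exists_jStarF_iso (h₁ : IsStableTStructure U V) (h₂ : IsStableTStructure V W)
    {B : T} (hB : B ∈ W) :
    Nonempty ((jStarF h₁ h₂).obj ((Eqv h₁ h₂).inverse.obj ⟨B, hB⟩) ≅ B) :=
  ⟨(ObjectProperty.ι (· ∈ W)).mapIso ((Eqv h₁ h₂).counitIso.app ⟨B, hB⟩)⟩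

end Images

section Zeros

variable {U V W : Set T}

lemma isZero_trunc_A_of_memW (h₂ : IsStableTStructure V W) {Y : T} (hY : Y ∈ W) :
    IsZero ((trunc h₂ Y).A) := by
  have hu : (trunc h₂ Y).u = 0 := h₂.hom_zero _ (trunc h₂ Y).hA _ hY _
  have bij := postcomp₁_bij _ (trunc h₂ Y).dist ((trunc h₂ Y).A)
    (fun f => h₂.hom_zero _ (trunc h₂ Y).hA _ (trunc h₂ Y).hB f)
    (fun f => h₂.hom_zero _ (trunc h₂ Y).hA _ (memV_shift h₂ (-1) (trunc h₂ Y).hB) f)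
  rw [IsZero.iff_id_eq_zero]
  apply bij.1
  show 𝟙 _ ≫ (trunc h₂ Y).u = 0 ≫ (trunc h₂ Y).u
  rw [hu, Limits.comp_zero, Limits.zero_comp]

lemma isZero_trunc_B_of_memU (h₁ : IsStableTStructure U V) {A : T} (hA : A ∈ U) :
    IsZero ((trunc h₁ A).B) := by
  have hv : (trunc h₁ A).v = 0 := h₁.hom_zero _ hA _ (trunc h₁ A).hB _
  have bij := precomp₂_bij _ (trunc h₁ A).dist ((trunc h₁ A).B)
    (fun f => h₁.hom_zero _ (trunc h₁ A).hA _ (trunc h₁ A).hB f)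
    (fun f => h₁.hom_zero _ (memU_shift h₁ 1 (trunc h₁ A).hA) _ (trunc h₁ A).hB f)
  rw [IsZero.iff_id_eq_zero]
  apply bij.1
  show (trunc h₁ A).v ≫ 𝟙 _ = (trunc h₁ A).v ≫ 0
  rw [hv, Limits.comp_zero, Limits.zero_comp]

lemma isZero_trunc_B_of_memV (h₂ : IsStableTStructure V W) {X : T} (hX : X ∈ V) :
    IsZero ((trunc h₂ X).B) := by
  have hv : (trunc h₂ X).v = 0 := h₂.hom_zero _ hX _ (trunc h₂ X).hB _
  have bij := precomp₂_bij _ (trunc h₂ X).dist ((trunc h₂ X).B)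
    (fun f => h₂.hom_zero _ (trunc h₂ X).hA _ (trunc h₂ X).hB f)
    (fun f => h₂.hom_zero _ (memU_shift h₂ 1 (trunc h₂ X).hA) _ (trunc h₂ X).hB f)
  rw [IsZero.iff_id_eq_zero]
  apply bij.1
  show (trunc h₂ X).v ≫ 𝟙 _ = (trunc h₂ X).v ≫ 0
  rw [hv, Limits.comp_zero, Limits.zero_comp]

lemma isZero_Q_of_memV (h₁ : IsStableTStructure U V) (h₂ : IsStableTStructure V W)
    (Xv : ObjectProperty.FullSubcategory (· ∈ V)) :
    IsZero ((coneInProp V).Q.obj ((ObjectProperty.ι (· ∈ V)).obj Xv)) := by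
  apply isZero_of_functor_isZero (Eqv h₁ h₂)
  exact IsZero.of_iso (isZero_fullSub _ (isZero_trunc_B_of_memV h₂ Xv.property))
    ((QEqvIso h₁ h₂).app _)

end Zeros

section Triangles

variable {U V W : Set T}

lemma adj3_counit_postcomp_bij (h₁ : IsStableTStructure U V) (h₂ : IsStableTStructure V W)
    (X : T) {A' : T} (hA' : A' ∈ U) :
    Function.Bijective (fun k : A' ⟶ (jLowF h₁ h₂).obj ((coneInProp V).Q.obj X) =>
      k ≫ (adj3 h₁ h₂).counit.app X) := by
  haveI := jLowF_full h₁ h₂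
  haveI := jLowF_faithful h₁ h₂
  obtain ⟨e⟩ := exists_jLowF_iso h₁ h₂ hA'
  have base := counit_postcomp_bij (adj3 h₁ h₂)
    (Functor.FullyFaithful.ofFullyFaithful _) X ((Eqv h₁ h₂).inverse.obj ((bF h₂).obj A'))
  have comm : (fun k : A' ⟶ (jLowF h₁ h₂).obj ((coneInProp V).Q.obj X) =>
        e.hom ≫ (k ≫ (adj3 h₁ h₂).counit.app X))
      = fun k : A' ⟶ (jLowF h₁ h₂).obj ((coneInProp V).Q.obj X) =>
          (e.hom ≫ k) ≫ (adj3 h₁ h₂).counit.app X := by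
    funext k
    rw [Category.assoc]
  refine (Function.Bijective.of_comp_iff' (iso_precomp_bij e X) _).mp ?_
  show Function.Bijective (fun k : A' ⟶ (jLowF h₁ h₂).obj ((coneInProp V).Q.obj X) =>
    e.hom ≫ (k ≫ (adj3 h₁ h₂).counit.app X))
  rw [comm]
  exact base.comp (iso_precomp_bij e _)

lemma adj4_unit_precomp_bij (h₁ : IsStableTStructure U V) (h₂ : IsStableTStructure V W)
    (X : T) {B' : T} (hB' : B' ∈ W) :
    Function.Bijective (fun k : (jStarF h₁ h₂).obj ((coneInProp V).Q.obj X) ⟶ B' =>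
      (adj4 h₁ h₂).unit.app X ≫ k) := by
  haveI := jStarF_full h₁ h₂
  haveI := jStarF_faithful h₁ h₂
  obtain ⟨e⟩ := exists_jStarF_iso h₁ h₂ hB'
  have base := unit_precomp_bij (adj4 h₁ h₂)
    (Functor.FullyFaithful.ofFullyFaithful _) X ((Eqv h₁ h₂).inverse.obj ⟨B', hB'⟩)
  have comm : (fun k : (jStarF h₁ h₂).obj ((coneInProp V).Q.obj X) ⟶
        (jStarF h₁ h₂).obj ((Eqv h₁ h₂).inverse.obj ⟨B', hB'⟩) =>
          (adj4 h₁ h₂).unit.app X ≫ (k ≫ e.hom))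
      = fun k : (jStarF h₁ h₂).obj ((coneInProp V).Q.obj X) ⟶
          (jStarF h₁ h₂).obj ((Eqv h₁ h₂).inverse.obj ⟨B', hB'⟩) =>
            ((adj4 h₁ h₂).unit.app X ≫ k) ≫ e.hom := by
    funext k
    rw [Category.assoc]
  refine (Function.Bijective.of_comp_iff
    (fun k : (jStarF h₁ h₂).obj ((coneInProp V).Q.obj X) ⟶ B' =>
      (adj4 h₁ h₂).unit.app X ≫ k)
    (iso_postcomp_bij e ((jStarF h₁ h₂).obj ((coneInProp V).Q.obj X)))).mp ?_
  show Function.Bijective (fun k : (jStarF h₁ h₂).obj ((coneInProp V).Q.obj X) ⟶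
      (jStarF h₁ h₂).obj ((Eqv h₁ h₂).inverse.obj ⟨B', hB'⟩) =>
        (adj4 h₁ h₂).unit.app X ≫ (k ≫ e.hom))
  rw [comm]
  exact (iso_postcomp_bij e X).comp base

lemma triangle2_exists (h₁ : IsStableTStructure U V) (h₂ : IsStableTStructure V W) (X : T) :
    ∃ h : (ObjectProperty.ι (· ∈ V)).obj ((iUpF h₁).obj X) ⟶
        ((jLowF h₁ h₂).obj ((coneInProp V).Q.obj X))⟦(1 : ℤ)⟧,
      Triangle.mk ((adj3 h₁ h₂).counit.app X) ((adjA h₁).unit.app X) h ∈ distTriang T := by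
  have bij1 : Function.Bijective
      (fun g : (jLowF h₁ h₂).obj ((coneInProp V).Q.obj X) ⟶ (trunc h₁ X).A =>
        g ≫ (trunc h₁ X).u) :=
    postcomp₁_bij _ (trunc h₁ X).dist _
      (fun f => h₁.hom_zero _ (jLowF_obj_mem h₁ h₂ _) _ (trunc h₁ X).hB f)
      (fun f => h₁.hom_zero _ (jLowF_obj_mem h₁ h₂ _) _
        (memV_shift h₁ (-1) (trunc h₁ X).hB) f)
  set e1 := Equiv.ofBijective _ bij1 with he1
  set φ := e1.symm ((adj3 h₁ h₂).counit.app X) with hφdef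
  have hφ : φ ≫ (trunc h₁ X).u = (adj3 h₁ h₂).counit.app X :=
    e1.apply_symm_apply ((adj3 h₁ h₂).counit.app X)
  have hφiso : IsIso φ := by
    apply isIso_of_postcomp_bij φ U (jLowF_obj_mem h₁ h₂ _) (trunc h₁ X).hA
    intro A' hA'
    have bijA' : Function.Bijective (fun g : A' ⟶ (trunc h₁ X).A => g ≫ (trunc h₁ X).u) :=
      postcomp₁_bij _ (trunc h₁ X).dist _
        (fun f => h₁.hom_zero _ hA' _ (trunc h₁ X).hB f)
        (fun f => h₁.hom_zero _ hA' _ (memV_shift h₁ (-1) (trunc h₁ X).hB) f)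
    have comm : (fun g : A' ⟶ (trunc h₁ X).A => g ≫ (trunc h₁ X).u) ∘ (fun k => k ≫ φ)
        = fun k : A' ⟶ (jLowF h₁ h₂).obj ((coneInProp V).Q.obj X) =>
            k ≫ (adj3 h₁ h₂).counit.app X := by
      funext k
      show (k ≫ φ) ≫ (trunc h₁ X).u = _
      rw [Category.assoc, hφ]
    exact (Function.Bijective.of_comp_iff' bijA' _).mp
      (by rw [comm]; exact adj3_counit_postcomp_bij h₁ h₂ X hA')
  refine ⟨(trunc h₁ X).w ≫ (shiftFunctor T (1 : ℤ)).map (inv φ), ?_⟩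
  refine Pretriangulated.isomorphic_distinguished _ (trunc h₁ X).dist _ ?_
  refine Triangle.isoMk _ _ (@asIso _ _ _ _ φ hφiso) (Iso.refl _) (Iso.refl _) ?_ ?_ ?_
  · dsimp
    exact (Category.comp_id _).trans hφ.symm
  · dsimp
    exact (Category.comp_id _).trans ((adjA_unit_app h₁ X).trans (Category.id_comp _).symm)
  · dsimp
    exact (Category.assoc _ _ _).trans ((congrArg ((trunc h₁ X).w ≫ ·)
      ((CategoryTheory.Functor.map_comp _ _ _).symm.trans
        ((congrArg (shiftFunctor T (1 : ℤ)).map (IsIso.inv_hom_id φ)).trans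
          (CategoryTheory.Functor.map_id _ _)))).trans
      ((Category.comp_id _).trans (Category.id_comp _).symm))

lemma triangle1_exists (h₁ : IsStableTStructure U V) (h₂ : IsStableTStructure V W) (X : T) :
    ∃ h : (jStarF h₁ h₂).obj ((coneInProp V).Q.obj X) ⟶
        ((ObjectProperty.ι (· ∈ V)).obj ((iShriekF h₂).obj X))⟦(1 : ℤ)⟧,
      Triangle.mk ((adjB h₂).counit.app X) ((adj4 h₁ h₂).unit.app X) h ∈ distTriang T := by
  have bij2 : Function.Bijective
      (fun g : (trunc h₂ X).B ⟶ (jStarF h₁ h₂).obj ((coneInProp V).Q.obj X) =>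
        (trunc h₂ X).v ≫ g) :=
    precompV_bij h₂ X (jStarF_obj_mem h₁ h₂ _)
  set e2 := Equiv.ofBijective _ bij2 with he2
  set ψ := e2.symm ((adj4 h₁ h₂).unit.app X) with hψdef
  have hψ : (trunc h₂ X).v ≫ ψ = (adj4 h₁ h₂).unit.app X :=
    e2.apply_symm_apply ((adj4 h₁ h₂).unit.app X)
  have hψiso : IsIso ψ := by
    apply isIso_of_precomp_bij ψ W (trunc h₂ X).hB (jStarF_obj_mem h₁ h₂ _)
    intro B' hB'
    have comm : (fun k : (trunc h₂ X).B ⟶ B' => (trunc h₂ X).v ≫ k) ∘ (fun k => ψ ≫ k)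
        = fun k : (jStarF h₁ h₂).obj ((coneInProp V).Q.obj X) ⟶ B' =>
            (adj4 h₁ h₂).unit.app X ≫ k := by
      funext k
      show (trunc h₂ X).v ≫ ψ ≫ k = _
      rw [← Category.assoc, hψ]
    exact (Function.Bijective.of_comp_iff' (precompV_bij h₂ X hB') _).mp
      (by rw [comm]; exact adj4_unit_precomp_bij h₁ h₂ X hB')
  refine ⟨inv ψ ≫ (trunc h₂ X).w, ?_⟩
  refine Pretriangulated.isomorphic_distinguished _ (trunc h₂ X).dist _ ?_
  refine Triangle.isoMk _ _ (Iso.refl _) (Iso.refl _) (asIso ψ).symm ?_ ?_ ?_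
  · dsimp
    exact (Category.comp_id _).trans ((adjB_counit_app h₂ X).trans (Category.id_comp _).symm)
  · dsimp
    exact ((congrArg (· ≫ inv ψ) hψ.symm).trans ((Category.assoc _ _ _).trans
      ((congrArg ((trunc h₂ X).v ≫ ·) (IsIso.hom_inv_id ψ)).trans (Category.comp_id _)))).trans
      (Category.id_comp _).symm
  · dsimp
    exact (congrArg (fun t : (trunc h₂ X).A⟦(1 : ℤ)⟧ ⟶ (trunc h₂ X).A⟦(1 : ℤ)⟧ =>
      (inv ψ ≫ (trunc h₂ X).w) ≫ t) (CategoryTheory.Functor.map_id _ _)).trans (Category.comp_id _)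

end Triangles

end Miyachi
/-- Miyachi's proposition: two overlapping stable t-structures `(U, V)` and `(V, W)` on `T`
yield a recollement of `T` relative to (the full subcategory) `V` and the Verdier quotient
`T/V`, where `i_*` is the canonical embedding of `V`, `j^*` is the quotient functor, the
essential image of `j_!` is `U` and the essential image of `j_*` is `W`. -/
theorem recollement_of_two_stable_tStructures (U V W : Set T)
    (h₁ : IsStableTStructure U V) (h₂ : IsStableTStructure V W) :
    ∃ R : Recollement (ObjectProperty.FullSubcategory (· ∈ V)) T (coneInProp V).Localization,
      R.iStar = ObjectProperty.ι (· ∈ V) ∧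
      R.jUp = (coneInProp V).Q ∧
      {Y : T | ∃ X, Nonempty (R.jLow.obj X ≅ Y)} = U ∧
      {Y : T | ∃ X, Nonempty (R.jStar.obj X ≅ Y)} = W := by
  classical
  refine ⟨{
    iStar := ObjectProperty.ι (· ∈ V)
    iUp := Miyachi.iUpF h₁
    iShriek := Miyachi.iShriekF h₂
    jUp := (coneInProp V).Q
    jLow := Miyachi.jLowF h₁ h₂
    jStar := Miyachi.jStarF h₁ h₂
    adj₁ := Miyachi.adjA h₁
    adj₂ := Miyachi.adjB h₂
    adj₃ := Miyachi.adj3 h₁ h₂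
    adj₄ := Miyachi.adj4 h₁ h₂
    iStar_full := inferInstance
    iStar_faithful := inferInstance
    jLow_full := Miyachi.jLowF_full h₁ h₂
    jLow_faithful := Miyachi.jLowF_faithful h₁ h₂
    jStar_full := Miyachi.jStarF_full h₁ h₂
    jStar_faithful := Miyachi.jStarF_faithful h₁ h₂
    iShriek_jStar_zero := fun M => Miyachi.isZero_fullSub _
      (Miyachi.isZero_trunc_A_of_memW h₂ (Miyachi.jStarF_obj_mem h₁ h₂ M))
    jUp_iStar_zero := fun Xv => Miyachi.isZero_Q_of_memV h₁ h₂ Xv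
    iUp_jLow_zero := fun M => Miyachi.isZero_fullSub _
      (Miyachi.isZero_trunc_B_of_memU h₁ (Miyachi.jLowF_obj_mem h₁ h₂ M))
    triangle₁ := Miyachi.triangle1_exists h₁ h₂
    triangle₂ := Miyachi.triangle2_exists h₁ h₂ }, rfl, rfl, ?_, ?_⟩
  · ext A
    simp only [Set.mem_setOf_eq]
    constructor
    · rintro ⟨M, ⟨e⟩⟩
      exact h₁.U_iso_closed e (Miyachi.jLowF_obj_mem h₁ h₂ M)
    · intro hA
      exact ⟨(Miyachi.Eqv h₁ h₂).inverse.obj ((Miyachi.bF h₂).obj A),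
        Miyachi.exists_jLowF_iso h₁ h₂ hA⟩
  · ext B
    simp only [Set.mem_setOf_eq]
    constructor
    · rintro ⟨M, ⟨e⟩⟩
      exact h₂.V_iso_closed e (Miyachi.jStarF_obj_mem h₁ h₂ M)
    · intro hB
      exact ⟨(Miyachi.Eqv h₁ h₂).inverse.obj ⟨B, hB⟩,
        Miyachi.exists_jStarF_iso h₁ h₂ hB⟩

end
end

section
/- Let A be a noetherian ring and X a bounded above complex of finitely generated projective A-modules with bounded cohomology, and suppose there is an integer m such that the kernel of the differential ∂^i_X is a finitely generated Gorenstein projective A-module for all i ≤ m. Then X is isomorphic in the derived category D(mod-A) to a bounded complex of finitely generated Gorenstein projective A-modules. -/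
open CategoryTheory CategoryTheory.Limits

universe u

variable (A : Type u) [Ring A]

/-- A totally acyclic complex of projective `A`-modules. -/
def IsTotallyAcyclicProj (P : CochainComplex (ModuleCat.{u} A) ℤ) : Prop :=
  (∀ n : ℤ, Projective (P.X n)) ∧
  (∀ n : ℤ, P.ExactAt n) ∧
  (∀ Q : ModuleCat.{u} A, Projective Q → ∀ n,
    ((((preadditiveYoneda.obj Q).mapHomologicalComplex _).obj P.op).ExactAt n))

/-- A Gorenstein projective `A`-module: a syzygy of a totally acyclic complex of
projectives. -/
def IsGorensteinProjective (M : ModuleCat.{u} A) : Prop :=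
  ∃ (P : CochainComplex (ModuleCat.{u} A) ℤ) (n : ℤ),
    IsTotallyAcyclicProj A P ∧ Nonempty (M ≅ P.cycles n)

namespace GPAux

open ZeroObject HomologicalComplex

variable {A}

/-- The 2-periodic complex `⋯ → P →id P →0 P →id P → ⋯` associated to a module `P`. -/
noncomputable def perCplx (P : ModuleCat.{u} A) : CochainComplex (ModuleCat.{u} A) ℤ where
  X _ := P
  d i j := if _ : i + 1 = j then (if Even i then 𝟙 P else 0) else 0
  shape i j h := dif_neg h
  d_comp_d' i j k hij hjk := by
    dsimp at hij hjk ⊢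
    change i + 1 = j at hij; change j + 1 = k at hjk
    rw [if_pos hij, if_pos hjk]
    rcases Int.even_or_odd i with he | ho
    · have hj : ¬ Even j := by subst hij; rw [Int.even_add_one]; exact not_not_intro he
      rw [if_neg hj, comp_zero]
    · have hi : ¬ Even i := Int.not_even_iff_odd.mpr ho
      rw [if_neg hi, zero_comp]

lemma perCplx_d_eq_id {P : ModuleCat.{u} A} {i j : ℤ} (hij : i + 1 = j) (h : Even i) :
    (perCplx P).d i j = 𝟙 P := by
  dsimp [perCplx]
  rw [if_pos hij, if_pos h]

lemma perCplx_d_eq_zero {P : ModuleCat.{u} A} {i j : ℤ} (h : ¬ Even i) :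
    (perCplx P).d i j = 0 := by
  dsimp [perCplx]
  split_ifs <;> rfl

lemma perCplx_exactAt (P : ModuleCat.{u} A) (n : ℤ) : (perCplx P).ExactAt n := by
  rw [exactAt_iff' _ (n-1) n (n+1) (by simp) (by simp)]
  rw [ShortComplex.moduleCat_exact_iff]
  intro x hx
  rcases Int.even_or_odd n with he | ho
  · refine ⟨0, ?_⟩
    have hg : (perCplx P).d n (n+1) = 𝟙 P := perCplx_d_eq_id rfl he
    have hx0 : x = 0 := by
      have h' : ((perCplx P).d n (n+1)) x = 0 := hx
      rw [hg] at h'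
      exact h'
    simp [hx0]
  · have h1 : Even (n - 1) := by
      rcases ho with ⟨k, hk⟩
      exact ⟨k, by omega⟩
    have hf : (perCplx P).d (n-1) n = 𝟙 P := perCplx_d_eq_id (by omega) h1
    refine ⟨x, ?_⟩
    show ((perCplx P).d (n-1) n) x = x
    rw [hf]
    rfl

lemma perCplx_op_exactAt (P : ModuleCat.{u} A) (Q : ModuleCat.{u} A) (n : ℤ) :
    ((((preadditiveYoneda.obj Q).mapHomologicalComplex _).obj (perCplx P).op).ExactAt n) := by
  rw [exactAt_iff' _ (n+1) n (n-1) ?hp ?hn]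
  case hp =>
    exact ComplexShape.prev_eq' _ (show n + 1 = n + 1 from rfl)
  case hn =>
    exact ComplexShape.next_eq' _ (show n - 1 + 1 = n by omega)
  rw [ShortComplex.ab_exact_iff]
  intro (x : P ⟶ Q) hx
  rcases Int.even_or_odd n with he | ho
  · have hd : (perCplx P).d n (n+1) = 𝟙 P := perCplx_d_eq_id rfl he
    refine ⟨x, ?_⟩
    show (preadditiveYoneda.obj Q).map ((perCplx P).d n (n+1)).op x = x
    rw [hd]
    show 𝟙 _ ≫ x = x
    simp
  · have h1 : Even (n - 1) := by
      rcases ho with ⟨k, hk⟩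
      exact ⟨k, by omega⟩
    have hd : (perCplx P).d (n-1) n = 𝟙 P := perCplx_d_eq_id (by omega) h1
    have hx0 : x = 0 := by
      have : (preadditiveYoneda.obj Q).map ((perCplx P).d (n-1) n).op x = 0 := hx
      rw [hd] at this
      simpa using (show 𝟙 _ ≫ x = (0 : P ⟶ Q) from this)
    refine ⟨0, by simp [hx0, map_zero]; rfl⟩

lemma gp_of_projective {P : ModuleCat.{u} A} (hP : Projective P) :
    IsGorensteinProjective A P := by
  refine ⟨perCplx P, 1, ⟨fun n => hP, perCplx_exactAt P, fun Q _ n => perCplx_op_exactAt P Q n⟩, ?_⟩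
  have hd : (perCplx P).d 1 ((ComplexShape.up ℤ).next 1) = 0 :=
    perCplx_d_eq_zero (by decide)
  have : IsIso ((perCplx P).iCycles 1) := ShortComplex.isIso_iCycles _ hd
  exact ⟨(asIso ((perCplx P).iCycles 1)).symm⟩

lemma gp_of_iso {M N : ModuleCat.{u} A} (e : M ≅ N) (h : IsGorensteinProjective A N) :
    IsGorensteinProjective A M := by
  obtain ⟨P, n, hP, ⟨e'⟩⟩ := h
  exact ⟨P, n, hP, ⟨e ≪≫ e'⟩⟩

lemma fin_of_iso {M N : ModuleCat.{u} A} (e : M ≅ N) (h : Module.Finite A N) :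
    Module.Finite A M :=
  Module.Finite.equiv e.symm.toLinearEquiv

lemma projective_of_isZero {C : Type*} [Category C] [HasZeroMorphisms C] {X : C} (h : IsZero X) :
    Projective X where
  factors f e _ := ⟨0, by rw [zero_comp]; exact (h.eq_of_src _ _)⟩


section Trunc

variable (X : CochainComplex (ModuleCat.{u} A) ℤ) (n : ℤ)

/-- The degree `i` object of the truncation of `X` at `n`. -/
noncomputable def truncX (i : ℤ) : ModuleCat.{u} A :=
  if n < i then X.X i else if i = n then X.opcycles n else 0

/-- Identification in degrees `> n`. -/
noncomputable def truncXIso {i : ℤ} (h : n < i) : truncX X n i ≅ X.X i :=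
  eqToIso (if_pos h)

/-- Identification in degree `n`. -/
noncomputable def truncXIsoOp {i : ℤ} (h : i = n) : truncX X n i ≅ X.opcycles n :=
  eqToIso (by rw [truncX, if_neg (by omega), if_pos h])

lemma truncX_isZero {i : ℤ} (h : i < n) : IsZero (truncX X n i) := by
  rw [truncX, if_neg (by omega), if_neg (by omega)]
  exact isZero_zero _

/-- The differentials of the truncation. -/
noncomputable def truncD (i j : ℤ) : truncX X n i ⟶ truncX X n j :=
  if hij : i + 1 = j then
    (if h : n < i then
      (truncXIso X n h).hom ≫ X.d i j ≫ (truncXIso X n (show n < j by omega)).inv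
     else if h' : i = n then
      (truncXIsoOp X n h').hom ≫ X.fromOpcycles n j ≫
        (truncXIso X n (show n < j by omega)).inv
     else 0)
  else 0

lemma truncD_eq_of_lt {i j : ℤ} (hij : i + 1 = j) (h : n < i) :
    truncD X n i j =
      (truncXIso X n h).hom ≫ X.d i j ≫ (truncXIso X n (show n < j by omega)).inv := by
  rw [truncD, dif_pos hij, dif_pos h]

lemma truncD_eq_boundary {j : ℤ} (hij : n + 1 = j) :
    truncD X n n j = (truncXIsoOp X n rfl).hom ≫ X.fromOpcycles n j ≫
      (truncXIso X n (show n < j by omega)).inv := by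
  rw [truncD, dif_pos hij, dif_neg (lt_irrefl n), dif_pos rfl]

lemma truncD_eq_zero {i j : ℤ} (h : i < n) : truncD X n i j = 0 := by
  rw [truncD]
  split_ifs <;> first | rfl | omega

/-- The truncation `τ^{≥ n} X` as a cochain complex. -/
noncomputable def truncC : CochainComplex (ModuleCat.{u} A) ℤ where
  X := truncX X n
  d := truncD X n
  shape _ _ h := dif_neg h
  d_comp_d' i j k hij hjk := by
    change i + 1 = j at hij; change j + 1 = k at hjk
    rcases lt_trichotomy i n with h | h | h
    · rw [truncD_eq_zero X n h, zero_comp]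
    · subst h
      rw [truncD_eq_boundary X i hij, truncD_eq_of_lt X i hjk (by omega)]
      simp
    · rw [truncD_eq_of_lt X n hij h, truncD_eq_of_lt X n hjk (by omega)]
      simp

/-- The components of the canonical projection `X ⟶ τ^{≥ n} X`. -/
noncomputable def truncπf (i : ℤ) : X.X i ⟶ truncX X n i :=
  if h : n < i then (truncXIso X n h).inv
  else if h' : i = n then
    X.pOpcycles i ≫ eqToHom (show X.opcycles i = X.opcycles n by rw [h']) ≫ (truncXIsoOp X n h').inv
  else 0

lemma truncπf_of_lt {i : ℤ} (h : n < i) : truncπf X n i = (truncXIso X n h).inv := by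
  unfold truncπf
  rw [dif_pos h]

lemma truncπf_boundary :
    truncπf X n n = X.pOpcycles n ≫ (truncXIsoOp X n rfl).inv := by
  unfold truncπf
  rw [dif_neg (lt_irrefl n), dif_pos rfl]
  simp

lemma truncπf_of_gt {i : ℤ} (h : i < n) : truncπf X n i = 0 := by
  unfold truncπf
  rw [dif_neg (by omega), dif_neg (by omega)]

lemma truncπ_comm (i j : ℤ) (hij : i + 1 = j) :
    truncπf X n i ≫ truncD X n i j = X.d i j ≫ truncπf X n j := by
  rcases lt_trichotomy i n with h | h | h
  · rw [truncπf_of_gt X n h, zero_comp]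
    by_cases hj : j = n
    · subst hj
      rw [truncπf_boundary, ← Category.assoc, X.d_pOpcycles, zero_comp]
    · rw [truncπf_of_gt X n (by omega), comp_zero]
  · subst h
    rw [truncπf_boundary, truncD_eq_boundary X i hij,
      truncπf_of_lt X i (show i < j by omega)]
    simp
  · rw [truncπf_of_lt X n h, truncπf_of_lt X n (show n < j by omega),
      truncD_eq_of_lt X n hij h]
    simp

/-- The canonical projection `X ⟶ τ^{≥ n} X`. -/
noncomputable def truncπ : X ⟶ truncC X n where
  f := truncπf X n
  comm' i j hij := truncπ_comm X n i j hij

lemma truncπ_f (i : ℤ) : (truncπ X n).f i = truncπf X n i := rfl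

lemma mono_fromOpcycles_of_exactAt (hX : X.ExactAt n) : Mono (X.fromOpcycles n (n+1)) := by
  rw [exactAt_iff' _ (n-1) n (n+1) (by simp) (by simp)] at hX
  have h1 : Mono ((X.sc' (n-1) n (n+1)).fromOpcycles) :=
    (ShortComplex.exact_iff_mono_fromOpcycles _).1 hX
  rw [← X.opcyclesIsoSc'_inv_fromOpcycles (n-1) n (n+1) (by simp) (by simp)] at h1
  rw [show X.fromOpcycles n (n+1) = (X.opcyclesIsoSc' (n-1) n (n+1) (by simp) (by simp)).hom ≫
    ((X.opcyclesIsoSc' (n-1) n (n+1) (by simp) (by simp)).inv ≫ X.fromOpcycles n (n+1)) from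
    (Iso.hom_inv_id_assoc _ _).symm]
  exact @mono_comp _ _ _ _ _ _ _ _ h1

lemma epi_toCycles_of_exactAt (hX : X.ExactAt (n+1)) : Epi (X.toCycles n (n+1)) := by
  rw [exactAt_iff' _ n (n+1) (n+2) (by simp) (by simp; omega)] at hX
  have h1 : Epi ((X.sc' n (n+1) (n+2)).toCycles) :=
    (ShortComplex.exact_iff_epi_toCycles _).1 hX
  rw [← X.toCycles_cyclesIsoSc'_hom n (n+1) (n+2) (by simp) (by simp; omega)] at h1
  rw [show X.toCycles n (n+1) = (X.toCycles n (n+1) ≫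
    (X.cyclesIsoSc' n (n+1) (n+2) (by simp) (by simp; omega)).hom) ≫
    (X.cyclesIsoSc' n (n+1) (n+2) (by simp) (by simp; omega)).inv by
      rw [Category.assoc, Iso.hom_inv_id, Category.comp_id]]
  exact @epi_comp _ _ _ _ _ _ h1 _ _

/-- When `X` is exact at `n` and `n+1`, the map `opcycles n → cycles (n+1)` is an iso. -/
noncomputable def opcyclesIsoCycles (h1 : X.ExactAt n) (h2 : X.ExactAt (n+1)) :
    X.opcycles n ≅ X.cycles (n+1) := by
  have hm : Mono (X.opcyclesToCycles n (n+1)) := by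
    have h := mono_fromOpcycles_of_exactAt X n h1
    rw [← X.opcyclesToCycles_iCycles n (n+1)] at h
    exact mono_of_mono _ (X.iCycles (n+1))
  have he : Epi (X.opcyclesToCycles n (n+1)) := by
    have h := epi_toCycles_of_exactAt X n h2
    rw [← X.pOpcycles_opcyclesToCycles n (n+1)] at h
    exact epi_of_epi (X.pOpcycles n) _
  have : IsIso (X.opcyclesToCycles n (n+1)) := isIso_of_mono_of_epi _
  exact asIso (X.opcyclesToCycles n (n+1))

end Trunc

end GPAux

/-- Let `A` be noetherian and `X` a bounded above complex of finitely generated projective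
`A`-modules with bounded cohomology whose kernels `Ker ∂^i = Z^i(X)` are finitely generated
Gorenstein projective for all `i ≤ m`. Then `X` is isomorphic in the derived category to a
bounded complex of finitely generated Gorenstein projective modules (there is a
quasi-isomorphism from `X` to such a complex). -/
theorem quasiIso_to_bounded_gorenstein_projective_complex
    [IsNoetherianRing A]
    (X : CochainComplex (ModuleCat.{u} A) ℤ)
    (hXfgproj : ∀ i : ℤ, Projective (X.X i) ∧ Module.Finite A (X.X i))
    (hXbdd : ∃ b : ℤ, ∀ i : ℤ, b < i → IsZero (X.X i))
    (hXcoh : ∃ a : ℤ, ∀ i : ℤ, i < a → X.ExactAt i)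
    (m : ℤ)
    (hker : ∀ i : ℤ, i ≤ m →
      IsGorensteinProjective A (X.cycles i) ∧ Module.Finite A (X.cycles i)) :
    ∃ (Y : CochainComplex (ModuleCat.{u} A) ℤ),
      (∃ a b : ℤ, ∀ i : ℤ, (i < a ∨ b < i) → IsZero (Y.X i)) ∧
      (∀ i : ℤ, IsGorensteinProjective A (Y.X i) ∧ Module.Finite A (Y.X i)) ∧
      ∃ f : X ⟶ Y, QuasiIso f := by
  classical
  obtain ⟨b0, hb0⟩ := hXbdd
  obtain ⟨a0, ha0⟩ := hXcoh
  set n : ℤ := min (a0 - 2) (m - 1) with hn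
  refine ⟨GPAux.truncC X n, ⟨n, max n b0, ?_⟩, ?_, GPAux.truncπ X n, ?_⟩
  · rintro i (hi | hi)
    · exact GPAux.truncX_isZero X n hi
    · exact (hb0 i (by omega)).of_iso (GPAux.truncXIso X n (by omega))
  · intro i
    rcases lt_trichotomy i n with h | h | h
    · have hz : IsZero ((GPAux.truncC X n).X i) := GPAux.truncX_isZero X n h
      have e : (GPAux.truncC X n).X i ≅ ModuleCat.of A PUnit :=
        hz.iso (ModuleCat.isZero_of_subsingleton _)
      exact ⟨GPAux.gp_of_projective (GPAux.projective_of_isZero hz),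
        GPAux.fin_of_iso e inferInstance⟩
    · subst h
      have hx1 : X.ExactAt n := ha0 n (by omega)
      have hx2 : X.ExactAt (n+1) := ha0 (n+1) (by omega)
      have e : (GPAux.truncC X n).X n ≅ X.cycles (n+1) :=
        GPAux.truncXIsoOp X n rfl ≪≫ GPAux.opcyclesIsoCycles X n hx1 hx2
      exact ⟨GPAux.gp_of_iso e (hker (n+1) (by omega)).1,
        GPAux.fin_of_iso e (hker (n+1) (by omega)).2⟩
    · have e : (GPAux.truncC X n).X i ≅ X.X i := GPAux.truncXIso X n h
      exact ⟨GPAux.gp_of_iso e (GPAux.gp_of_projective (hXfgproj i).1),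
        GPAux.fin_of_iso e (hXfgproj i).2⟩
  · refine ⟨fun i => ?_⟩
    rcases lt_trichotomy i n with h | h | h
    · rw [quasiIsoAt_iff_exactAt _ i (ha0 i (by omega))]
      rw [HomologicalComplex.exactAt_iff]
      exact ShortComplex.exact_of_isZero_X₂ _ (GPAux.truncX_isZero X n h)
    · subst h
      rw [quasiIsoAt_iff_exactAt _ n (ha0 n (by omega))]
      rw [HomologicalComplex.exactAt_iff' _ (n-1) n (n+1) (by simp) (by simp)]
      refine (ShortComplex.exact_iff_mono _ ?_).2 ?_
      · exact GPAux.truncD_eq_zero X n (by omega)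
      · show Mono (GPAux.truncD X n n (n+1))
        rw [GPAux.truncD_eq_boundary X n rfl]
        haveI := GPAux.mono_fromOpcycles_of_exactAt X n (ha0 n (by omega))
        infer_instance
    · rw [quasiIsoAt_iff' _ (i-1) i (i+1) (by simp) (by simp)]
      haveI : Epi (((HomologicalComplex.shortComplexFunctor' (ModuleCat.{u} A)
          (ComplexShape.up ℤ) (i-1) i (i+1)).map (GPAux.truncπ X n)).τ₁) := by
        show Epi (GPAux.truncπf X n (i-1))
        rcases eq_or_lt_of_le (show n ≤ i-1 by omega) with h1 | h1
        · rw [← h1, GPAux.truncπf_boundary]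
          exact epi_comp _ _
        · rw [GPAux.truncπf_of_lt X n h1]
          infer_instance
      haveI : IsIso (((HomologicalComplex.shortComplexFunctor' (ModuleCat.{u} A)
          (ComplexShape.up ℤ) (i-1) i (i+1)).map (GPAux.truncπ X n)).τ₂) := by
        show IsIso (GPAux.truncπf X n i)
        rw [GPAux.truncπf_of_lt X n h]
        infer_instance
      haveI : Mono (((HomologicalComplex.shortComplexFunctor' (ModuleCat.{u} A)
          (ComplexShape.up ℤ) (i-1) i (i+1)).map (GPAux.truncπ X n)).τ₃) := by
        show Mono (GPAux.truncπf X n (i+1))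
        rw [GPAux.truncπf_of_lt X n (by omega)]
        infer_instance
      apply ShortComplex.quasiIso_of_epi_of_isIso_of_mono
end

section
/- Let D be a triangulated category with coproducts, and let B and C be classes of objects of D such that Hom_D(C, B'[i]) = 0 for every C ∈ C, B' ∈ B and i ∈ ℤ, where every object of C is compact. Then Hom_D(X, Y[i]) = 0 for every X in the localizing subcategory Loc(C) generated by C, every Y in the localizing subcategory Loc(B) generated by B, and every i ∈ ℤ. -/
open CategoryTheory CategoryTheory.Limits CategoryTheory.Pretriangulated

universe v u

variable {D : Type u} [Category.{v} D] [Preadditive D] [HasCoproducts.{v} D]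

/-- The canonical map `⨁ᵢ Hom(X, fᵢ) → Hom(X, ∐ f)`. -/
noncomputable def coproductComparison (X : D) {ι : Type v} (f : ι → D) :
    DirectSum ι (fun i => X ⟶ f i) →+ (X ⟶ ∐ f) :=
  letI := Classical.decEq ι
  DirectSum.toAddMonoid fun i =>
    AddMonoidHom.mk' (fun g => g ≫ Sigma.ι f i) (fun _ _ => Preadditive.add_comp _ _ _ _ _ _)

/-- An object `X` is compact if `Hom(X, −)` commutes with coproducts. -/
def IsCompactObject (X : D) : Prop :=
  ∀ (ι : Type v) (f : ι → D), Function.Bijective (coproductComparison X f)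

section

variable [HasZeroObject D] [HasShift D ℤ]
  [∀ n : ℤ, (shiftFunctor D n).Additive] [Pretriangulated D]

/-- A localizing subcategory: a full triangulated subcategory closed under coproducts. -/
structure IsLocalizingSet (S : Set D) : Prop where
  iso_closed : ∀ ⦃X Y : D⦄, (X ≅ Y) → X ∈ S → Y ∈ S
  shift_closed : ∀ (X : D) (i : ℤ), X ∈ S → (shiftFunctor D i).obj X ∈ S
  ext_closed : ∀ (T : Triangle D), T ∈ (distTriang D) → T.obj₁ ∈ S → T.obj₃ ∈ S → T.obj₂ ∈ S
  coproduct_closed : ∀ (ι : Type v) (f : ι → D), (∀ k, f k ∈ S) → (∐ f) ∈ S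

/-- The smallest localizing subcategory containing `L`. -/
def LocGen (L : Set D) : Set D :=
  ⋂₀ {S : Set D | IsLocalizingSet S ∧ L ⊆ S}

/-- If every object of a class `𝒞` of compact objects is left-orthogonal to all shifts of
objects of a class `ℬ`, then the same holds for the localizing subcategories they generate. -/
theorem hom_vanishing_loc_of_hom_vanishing (ℬ 𝒞 : Set D)
    (h𝒞c : ∀ C₀ ∈ 𝒞, IsCompactObject C₀)
    (hvan : ∀ C₀ ∈ 𝒞, ∀ B₀ ∈ ℬ, ∀ (i : ℤ) (f : C₀ ⟶ (shiftFunctor D i).obj B₀), f = 0) :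
    ∀ X ∈ LocGen 𝒞, ∀ Y ∈ LocGen ℬ, ∀ (i : ℤ) (f : X ⟶ (shiftFunctor D i).obj Y), f = 0 := by
  classical
  -- `LocGen` is itself localizing
  have locgen_loc : ∀ (L : Set D), IsLocalizingSet (LocGen L) := by
    intro L
    constructor
    · intro X Y e hX S hS
      exact hS.1.iso_closed e (hX S hS)
    · intro X i hX S hS
      exact hS.1.shift_closed X i (hX S hS)
    · intro T hT h₁ h₃ S hS
      exact hS.1.ext_closed T hT (h₁ S hS) (h₃ S hS)
    · intro ι f hf S hS
      exact hS.1.coproduct_closed ι f (fun k => hf k S hS)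
  -- Step 1 : all `Y ∈ LocGen ℬ` satisfy `Hom(C₀, Y⟦i⟧) = 0` for `C₀ ∈ 𝒞`
  set S₁ : Set D := {Y : D | ∀ C₀ ∈ 𝒞, ∀ (i : ℤ) (f : C₀ ⟶ (shiftFunctor D i).obj Y), f = 0}
    with hS₁def
  have hS₁loc : IsLocalizingSet S₁ := by
    constructor
    · intro X Y e hX C₀ hC₀ i f
      have : f ≫ (shiftFunctor D i).map e.inv = 0 := hX C₀ hC₀ i _
      calc f = (f ≫ (shiftFunctor D i).map e.inv) ≫ (shiftFunctor D i).map e.hom := by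
              simp [← Functor.map_comp]
        _ = 0 := by rw [this, Limits.zero_comp]
    · intro X j hX C₀ hC₀ i f
      have h0 : f ≫ ((shiftFunctorAdd D j i).inv.app X) = 0 := hX C₀ hC₀ (j + i) _
      calc f = (f ≫ (shiftFunctorAdd D j i).inv.app X) ≫ (shiftFunctorAdd D j i).hom.app X := by
              simp
        _ = 0 := by rw [h0, Limits.zero_comp]
    · intro T hT h₁ h₃ C₀ hC₀ i f
      have hT' := Triangle.shift_distinguished T hT i
      set T' := (CategoryTheory.shiftFunctor (Triangle D) i).obj T with hT'def
      have hobj₁ : T'.obj₁ = (shiftFunctor D i).obj T.obj₁ := rfl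
      have hobj₂ : T'.obj₂ = (shiftFunctor D i).obj T.obj₂ := rfl
      have hobj₃ : T'.obj₃ = (shiftFunctor D i).obj T.obj₃ := rfl
      have hf : f ≫ T'.mor₂ = 0 := h₃ C₀ hC₀ i (f ≫ T'.mor₂)
      obtain ⟨g, hg⟩ := Triangle.coyoneda_exact₂ T' hT' f hf
      have hg0 : g = 0 := h₁ C₀ hC₀ i g
      rw [hg, hg0, Limits.zero_comp]
      rfl
    · intro ι f hf C₀ hC₀ i g
      -- use compactness of C₀ and that the shift preserves coproducts
      have hiso : IsIso (sigmaComparison (shiftFunctor D i) f) := inferInstance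
      set c := sigmaComparison (shiftFunctor D i) f with hc
      -- the composition with the inverse lands in the coproduct of shifted objects
      set g' : C₀ ⟶ ∐ (fun k => (shiftFunctor D i).obj (f k)) := g ≫ inv c with hg'
      obtain ⟨x, hx⟩ := (h𝒞c C₀ hC₀ ι (fun k => (shiftFunctor D i).obj (f k))).2 g'
      have hx0 : x = 0 := by
        refine DFinsupp.ext fun k => ?_
        exact hf k C₀ hC₀ i _
      have hg'0 : g' = 0 := by
        rw [← hx, hx0, map_zero]
      calc g = g' ≫ c := by rw [hg', Category.assoc, IsIso.inv_hom_id, Category.comp_id]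
        _ = 0 := by rw [hg'0, Limits.zero_comp]
  have hℬS₁ : ℬ ⊆ S₁ := by
    intro B₀ hB₀ C₀ hC₀ i f
    exact hvan C₀ hC₀ B₀ hB₀ i f
  have h₁ : LocGen ℬ ⊆ S₁ := fun Y hY => hY S₁ ⟨hS₁loc, hℬS₁⟩
  -- Step 2 : all `X ∈ LocGen 𝒞` satisfy `Hom(X, Y) = 0` for `Y ∈ LocGen ℬ`
  set S₂ : Set D := {X : D | ∀ Y ∈ LocGen ℬ, ∀ (f : X ⟶ Y), f = 0} with hS₂def
  have hS₂loc : IsLocalizingSet S₂ := by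
    constructor
    · intro X X' e hX Y hY f
      have : e.hom ≫ f = 0 := hX Y hY _
      calc f = e.inv ≫ e.hom ≫ f := by simp
        _ = 0 := by rw [this, Limits.comp_zero]
    · intro X j hX Y hY f
      have hY' : (shiftFunctor D (-j)).obj Y ∈ LocGen ℬ := (locgen_loc ℬ).shift_closed Y (-j) hY
      set e := ((shiftEquiv D j).toAdjunction.homEquiv X Y)
      have h0 : e f = 0 := hX _ hY' (e f)
      have : f = e.symm (e f) := (e.symm_apply_apply f).symm
      rw [this, h0]
      show (shiftFunctor D j).map 0 ≫ _ = 0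
      rw [Functor.map_zero]
      exact Limits.zero_comp
    · intro T hT h₁' h₃' Y hY f
      have hf : T.mor₁ ≫ f = 0 := h₁' Y hY _
      obtain ⟨g, hg⟩ := Triangle.yoneda_exact₂ T hT f hf
      have hg0 : g = 0 := h₃' Y hY g
      rw [hg, hg0, Limits.comp_zero]
    · intro ι f hf Y hY g
      ext k
      rw [hf k Y hY (Sigma.ι f k ≫ g), Limits.comp_zero]
  have h𝒞S₂ : 𝒞 ⊆ S₂ := by
    intro C₀ hC₀ Y hY f
    have h0 : f ≫ (shiftFunctorZero D ℤ).inv.app Y = 0 := h₁ hY C₀ hC₀ 0 _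
    calc f = (f ≫ (shiftFunctorZero D ℤ).inv.app Y) ≫ (shiftFunctorZero D ℤ).hom.app Y := by simp
      _ = 0 := by rw [h0, Limits.zero_comp]
  have h₂ : LocGen 𝒞 ⊆ S₂ := fun X hX => hX S₂ ⟨hS₂loc, h𝒞S₂⟩
  intro X hX Y hY i f
  exact h₂ hX _ ((locgen_loc ℬ).shift_closed Y i hY) f

end
end
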